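/- Let n ≥ 0 and let π be in Perm_{n+1}. With the convention π(0) = 0, set x = π^{-1}(n+1), z = max{π(i) : 0 ≤ i ≤ x−1}, y = π^{-1}(z) (with y = 0 when z = 0), and w = min{π(i) : x ≤ i ≤ n+1}. Then x−1 ≤ z ≤ n and x−1 ≤ w ≤ x, and the following hold. (1) If z = n and z < w, then x = n+1, w = n+1, and {π(i) : 1 ≤ i ≤ n, i ≠ y} = {1,2,…,n−1}. (2) If z < n and z < w, then 1 ≤ x ≤ n, z = x−1, w = x, {π(i) : 1 ≤ i ≤ x−1, i ≠ y} = {1,…,x−2}, and {π(i) : x+1 ≤ i ≤ n+1} = {x,x+1,…,n}. (3) If z = n and z > w, then 2 ≤ x ≤ n, w = x−1, {π(i) : 1 ≤ i ≤ x−1, i ≠ y} = {1,…,x−2}, and {π(i) : x+1 ≤ i ≤ n+1} = {x−1,x,…,n−1}. (4) If z < n and z > w, then 2 ≤ x ≤ n−1, x−1 < z < n, w = x−1, {π(i) : 1 ≤ i ≤ x−1, i ≠ y} = {1,…,x−2}, {π(i) : x+1 ≤ i ≤ z+1} = {x−1,x,…,z−1}, and {π(i) : z+2 ≤ i ≤ n+1}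 = {z+1,z+2,…,n}. -/

import Mathlib

/-- An `F`-step: `(0,1)` or `(a,b)` with `a ≥ 1` and `b ≤ 1`. -/
def IsFStep (s : ℤ × ℤ) : Prop := s = (0, 1) ∨ (1 ≤ s.1 ∧ s.2 ≤ 1)

/-- An `F`-path: a sequence of `F`-steps whose prefix sums satisfy
`a_1 + ⋯ + a_i ≤ b_1 + ⋯ + b_i`. -/
def IsFPath (Q : List (ℤ × ℤ)) : Prop :=
  (∀ s ∈ Q, IsFStep s) ∧
  ∀ i : ℕ, ((Q.take i).map Prod.fst).sum ≤ ((Q.take i).map Prod.snd).sum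

/-- The set of `F`-paths of length `n`. -/
def FPaths (n : ℕ) : Set (List (ℤ × ℤ)) := {Q | Q.length = n ∧ IsFPath Q}

def fheight (Q : List (ℤ × ℤ)) : ℤ := (Q.map Prod.snd).sum - (Q.map Prod.fst).sum

def fnorth (Q : List (ℤ × ℤ)) : ℕ := Q.countP (fun s => decide (s = ((0 : ℤ), (1 : ℤ))))

def faone (Q : List (ℤ × ℤ)) : ℕ := Q.countP (fun s => decide (s.1 = 1))

def fbone (Q : List (ℤ × ℤ)) : ℕ := Q.countP (fun s => decide (s.2 = 1))

/-- Steps of a Schröder path. -/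
inductive SStep : Type
  | u | d | h
deriving DecidableEq

/-- The width of a Schröder step. -/
def swidth : SStep → ℕ
  | .u => 1
  | .d => 1
  | .h => 2

/-- The height-change of a Schröder step. -/
def shc : SStep → ℤ
  | .u => 1
  | .d => -1
  | .h => 0

/-- A Schröder path of semilength `n`. -/
def IsSchroder (n : ℕ) (P : List SStep) : Prop :=
  (P.map swidth).sum = 2 * n ∧ (P.map shc).sum = 0 ∧
  ∀ i : ℕ, 0 ≤ ((P.take i).map shc).sum

/-- Schröder paths of semilength `n` without triple descents. -/
def SchP (n : ℕ) : Set (List SStep) :=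
  {P | IsSchroder n P ∧ ¬ [SStep.d, SStep.d, SStep.d] <:+: P}

/-- Number of `h` letters preceded by a prefix of total height-change `0`. -/
noncomputable def scomp (P : List SStep) : ℕ :=
  Set.ncard {i : ℕ | P[i]? = some SStep.h ∧ ((P.take i).map shc).sum = 0}

/-- Number of `h` letters plus number of double descents. -/
noncomputable def shdd (P : List SStep) : ℕ :=
  P.countP (fun s => decide (s = SStep.h)) +
    Set.ncard {i : ℕ | P[i]? = some SStep.d ∧ P[i + 1]? = some SStep.d}

/-- Number of peaks `ud`. -/
noncomputable def speak (P : List SStep) : ℕ :=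
  Set.ncard {i : ℕ | P[i]? = some SStep.u ∧ P[i + 1]? = some SStep.d}

/-- Steps of a bicolored Dyck path: up, red down, black down. -/
inductive BStep : Type
  | u | dR | dB
deriving DecidableEq

/-- A restricted bicolored Dyck path of semilength `n`:
`u^{i_1} dR^{j_1} dB^{k_1} ⋯ u^{i_{ℓ-1}} dR^{j_{ℓ-1}} dB^{k_{ℓ-1}} u^{i_ℓ} dR^{j_ℓ}`
with positive `i`'s and `k`'s, `∑ i = n`, `∑ j + ∑ k = n`, and every prefix having
at least as many `u`'s as down steps. -/
def IsRBD (n : ℕ) (B : List BStep) : Prop :=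
  (∃ (blocks : List (ℕ × ℕ × ℕ)) (iL jL : ℕ),
    (∀ t ∈ blocks, 1 ≤ t.1 ∧ 1 ≤ t.2.2) ∧ 1 ≤ iL ∧
    B = (blocks.map (fun t =>
        List.replicate t.1 BStep.u ++ List.replicate t.2.1 BStep.dR ++
          List.replicate t.2.2 BStep.dB)).flatten ++
        (List.replicate iL BStep.u ++ List.replicate jL BStep.dR) ∧
    (blocks.map (fun t => t.1)).sum + iL = n ∧
    (blocks.map (fun t => t.2.1)).sum + jL + (blocks.map (fun t => t.2.2)).sum = n) ∧
  ∀ i : ℕ, (B.take i).countP (fun s => decide (s ≠ BStep.u)) ≤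
    (B.take i).countP (fun s => decide (s = BStep.u))

/-- The length of the final run of red down steps. -/
def blast (B : List BStep) : ℕ := (B.reverse.takeWhile (fun s => decide (s = BStep.dR))).length

/-- The number of double ascents `uu`. -/
noncomputable def bdasc (B : List BStep) : ℕ :=
  Set.ncard {i : ℕ | B[i]? = some BStep.u ∧ B[i + 1]? = some BStep.u}

/-- The number of occurrences of `u dB u` or `dR dB u`. -/
noncomputable def bbval (B : List BStep) : ℕ :=
  Set.ncard {i : ℕ | (B[i]? = some BStep.u ∨ B[i]? = some BStep.dR) ∧
    B[i + 1]? = some BStep.dB ∧ B[i + 2]? = some BStep.u}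

/-- `π : ℕ → ℕ` encodes a permutation of `{1,…,N}`, with value `0` outside
(in particular `π 0 = 0`). -/
def IsPermOn (N : ℕ) (π : ℕ → ℕ) : Prop :=
  Set.BijOn π (Set.Icc 1 N) (Set.Icc 1 N) ∧ ∀ i, i ∉ Set.Icc 1 N → π i = 0

/-- `π` contains the pattern given by the word `σ`. -/
def ContainsPat (N : ℕ) (π : ℕ → ℕ) (σ : List ℕ) : Prop :=
  ∃ f : Fin σ.length → ℕ, StrictMono f ∧ (∀ t, f t ∈ Set.Icc 1 N) ∧
    ∀ s t : Fin σ.length, π (f s) < π (f t) ↔ σ.get s < σ.get t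

/-- Permutations of `{1,…,N}` avoiding the patterns `2341`, `2431` and `3241`. -/
def PermSet (N : ℕ) : Set (ℕ → ℕ) :=
  {π | IsPermOn N π ∧ ¬ContainsPat N π [2, 3, 4, 1] ∧ ¬ContainsPat N π [2, 4, 3, 1] ∧
    ¬ContainsPat N π [3, 2, 4, 1]}

/-- `block(π)`: the number of `j ∈ {1,…,N}` with `{π(1),…,π(j)} = {1,…,j}`. -/
noncomputable def blockStat (N : ℕ) (π : ℕ → ℕ) : ℕ :=
  Set.ncard {j : ℕ | 1 ≤ j ∧ j ≤ N ∧ π '' Set.Icc 1 j = Set.Icc 1 j}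

/-- `asc(π)`: the number of ascents of `π`. -/
noncomputable def ascStat (N : ℕ) (π : ℕ → ℕ) : ℕ :=
  Set.ncard {i : ℕ | 1 ≤ i ∧ i + 1 ≤ N ∧ π i < π (i + 1)}

/-- `crit(π)`: the number of critical entries of `π`. -/
noncomputable def critStat (N : ℕ) (π : ℕ → ℕ) : ℕ :=
  Set.ncard {i : ℕ | 1 ≤ i ∧ i ≤ N ∧ ∀ j k : ℕ, 1 ≤ j → j < i → i < k → k ≤ N →
    π j < π i → π k < π i → π j < π k}

/-- An inversion sequence: `0 ≤ e_i < i` (1-indexed). -/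
def IsInvSeq (e : List ℕ) : Prop := ∀ i : Fin e.length, e.get i < i.val + 1

/-- `e` contains the pattern `101`. -/
def Contains101 (e : List ℕ) : Prop :=
  ∃ i j k : Fin e.length, i < j ∧ j < k ∧ e.get j < e.get i ∧ e.get i = e.get k

/-- `e` contains the pattern `102`. -/
def Contains102 (e : List ℕ) : Prop :=
  ∃ i j k : Fin e.length, i < j ∧ j < k ∧ e.get j < e.get i ∧ e.get i < e.get k

/-- `e` contains the pattern `021`. -/
def Contains021 (e : List ℕ) : Prop :=
  ∃ i j k : Fin e.length, i < j ∧ j < k ∧ e.get i < e.get k ∧ e.get k < e.get j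

/-- Inversion sequences of length `n` avoiding `101` and `102`. -/
def ISet (n : ℕ) : Set (List ℕ) :=
  {e | e.length = n ∧ IsInvSeq e ∧ ¬Contains101 e ∧ ¬Contains102 e}

/-- Inversion sequences of length `n` avoiding `101` and `021`. -/
def JSet (n : ℕ) : Set (List ℕ) :=
  {e | e.length = n ∧ IsInvSeq e ∧ ¬Contains101 e ∧ ¬Contains021 e}

/-- The largest entry of `e` (`0` for the empty sequence). -/
def maxVal (e : List ℕ) : ℕ := e.foldr max 0

/-- The largest (1-indexed) position of the maximal entry of `e`. -/
def maxid (e : List ℕ) : ℕ := e.length - e.reverse.idxOf (maxVal e)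

/-- `e` with the entry at position `maxid e` removed. -/
def ehat (e : List ℕ) : List ℕ := e.eraseIdx (maxid e - 1)

/-- `omi(e)`: the number of `i ∈ {1,…,n}` not occurring as an entry of `e`. -/
noncomputable def omi (e : List ℕ) : ℕ := Set.ncard {i : ℕ | 1 ≤ i ∧ i ≤ e.length ∧ i ∉ e}

/-- `cons(e)`: the number of `i ∈ {1,…,n-1}` such that both `i-1` and `i` occur in `e`. -/
noncomputable def consStat (e : List ℕ) : ℕ :=
  Set.ncard {i : ℕ | 1 ≤ i ∧ i + 1 ≤ e.length ∧ (i - 1) ∈ e ∧ i ∈ e}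

/-- `first(e)`: the length of the initial run of zeros of `e`. -/
def firstStat (e : List ℕ) : ℕ := (e.takeWhile (fun v => decide (v = 0))).length

/-- `single(e)`: the number of positive integers occurring exactly once in `e`. -/
noncomputable def singleStat (e : List ℕ) : ℕ := Set.ncard {v : ℕ | 1 ≤ v ∧ e.count v = 1}

/-- The binomial coefficient `C(p,q)`, interpreted as `0` unless `0 ≤ q ≤ p`. -/
def C (p q : ℤ) : ℤ := if 0 ≤ q ∧ q ≤ p then (p.toNat.choose q.toNat : ℤ) else 0

/-!
Let `x` be the position of the maximal entry `n + 1`. If an entry after `x` had a value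
`v ≤ x - 2`, then two of the `x - 1` entries before `x` would exceed `v`, and with `n + 1` and `v`
they would form a 2341 or a 3241. So the values `1, …, x - 2` all occur before `x`, the one
remaining entry there is the maximum `z`, and the entries after `x` take the values
`{x - 1, …, n} \ {z}`; their least element is `w`. When `w < z < n`, avoiding 2431 (with the
entries `z` and `n + 1`) forces the entries after `x` below `z` to precede those above `z`.
-/

open Set

namespace IsPermOn

variable {N : ℕ} {π : ℕ → ℕ} {i j : ℕ}

lemma apply_mem (h : IsPermOn N π) (hi : i ∈ Icc 1 N) : π i ∈ Icc 1 N := h.1.mapsTo hi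

lemma one_le_apply_iff (h : IsPermOn N π) : 1 ≤ π i ↔ i ∈ Icc 1 N := by
  refine ⟨fun hi => ?_, fun hi => (h.apply_mem hi).1⟩
  by_contra hc
  rw [h.2 i hc] at hi
  omega

lemma eq_of_apply_eq (h : IsPermOn N π) (hi : 1 ≤ π i) (hij : π i = π j) : i = j :=
  h.1.injOn (h.one_le_apply_iff.1 hi) (h.one_le_apply_iff.1 (hij ▸ hi)) hij

lemma exists_apply_eq (h : IsPermOn N π) {v : ℕ} (hv : v ∈ Icc 1 N) :
    ∃ i ∈ Icc 1 N, π i = v := h.1.surjOn hv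

lemma card_Icc_le_of_mapsTo (h : IsPermOn N π) {a b c d : ℕ} (hc : 1 ≤ c)
    (hmaps : MapsTo π (Icc a b) (Icc c d)) : b + 1 - a ≤ d + 1 - c := by
  simpa using ncard_le_ncard_of_injOn π hmaps
    fun i hi j _ hij => h.eq_of_apply_eq (hc.trans (hmaps hi).1) hij

lemma apply_lt_of_ne (h : IsPermOn N π) {x : ℕ} (hπx : π x = N) (hi : i ∈ Icc 1 N)
    (hix : i ≠ x) : π i < N :=
  lt_of_le_of_ne (h.apply_mem hi).2 fun he =>
    hix (h.eq_of_apply_eq (h.apply_mem hi).1 (he.trans hπx.symm))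

end IsPermOn

lemma card_Icc_le_of_subset_image {f : ℕ → ℕ} {a b c d : ℕ}
    (hsub : Icc c d ⊆ f '' Icc a b) : d + 1 - c ≤ b + 1 - a := by
  simpa using (ncard_le_ncard hsub).trans (ncard_image_le (f := f) (finite_Icc a b))

lemma containsPat_of_four {N : ℕ} {π : ℕ → ℕ} {a b c d i j k l : ℕ}
    (hij : i < j) (hjk : j < k) (hkl : k < l) (hi : 1 ≤ i) (hl : l ≤ N)
    (hord : ∀ s t : Fin 4, π (![i, j, k, l] s) < π (![i, j, k, l] t) ↔
      [a, b, c, d].get s < [a, b, c, d].get t) :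
    ContainsPat N π [a, b, c, d] := by
  refine ⟨![i, j, k, l], ?_, fun t => ?_, hord⟩
  · intro s t hst
    fin_cases s <;> fin_cases t <;> simp_all <;> omega
  · fin_cases t <;> simp <;> omega

lemma containsPat_2341 {N : ℕ} {π : ℕ → ℕ} {i j k l : ℕ}
    (hij : i < j) (hjk : j < k) (hkl : k < l) (hi : 1 ≤ i) (hl : l ≤ N)
    (hv : π l < π i ∧ π i < π j ∧ π j < π k) : ContainsPat N π [2, 3, 4, 1] :=
  containsPat_of_four hij hjk hkl hi hl fun s t => by fin_cases s <;> fin_cases t <;> simp <;> omega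

lemma containsPat_2431 {N : ℕ} {π : ℕ → ℕ} {i j k l : ℕ}
    (hij : i < j) (hjk : j < k) (hkl : k < l) (hi : 1 ≤ i) (hl : l ≤ N)
    (hv : π l < π i ∧ π i < π k ∧ π k < π j) : ContainsPat N π [2, 4, 3, 1] :=
  containsPat_of_four hij hjk hkl hi hl fun s t => by fin_cases s <;> fin_cases t <;> simp <;> omega

lemma containsPat_3241 {N : ℕ} {π : ℕ → ℕ} {i j k l : ℕ}
    (hij : i < j) (hjk : j < k) (hkl : k < l) (hi : 1 ≤ i) (hl : l ≤ N)
    (hv : π l < π j ∧ π j < π i ∧ π i < π k) : ContainsPat N π [3, 2, 4, 1] :=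
  containsPat_of_four hij hjk hkl hi hl fun s t => by fin_cases s <;> fin_cases t <;> simp <;> omega

section Avoidance

variable {N : ℕ} {π : ℕ → ℕ} {x : ℕ}

lemma not_lt_and_lt_of_lt_max (h : IsPermOn N π) (h2341 : ¬ContainsPat N π [2, 3, 4, 1])
    (h3241 : ¬ContainsPat N π [3, 2, 4, 1]) (hπx : π x = N) {i j k : ℕ} (hi : 1 ≤ i)
    (hij : i < j) (hjx : j < x) (hxk : x < k) (hk : k ≤ N) : ¬(π k < π i ∧ π k < π j) := by
  rintro ⟨hki, hkj⟩
  have hiN := h.apply_lt_of_ne hπx (i := i) ⟨hi, by omega⟩ (by omega)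
  have hjN := h.apply_lt_of_ne hπx (i := j) ⟨by omega, by omega⟩ (by omega)
  have hne : π i ≠ π j := fun he => by
    have := h.eq_of_apply_eq (by omega) he
    omega
  rcases lt_or_gt_of_ne hne with hlt | hgt
  · exact h2341 (containsPat_2341 hij hjx hxk hi hk ⟨hki, hlt, by omega⟩)
  · exact h3241 (containsPat_3241 hij hjx hxk hi hk ⟨hkj, hgt, by omega⟩)

lemma sub_one_le_apply_of_lt_max (h : IsPermOn N π) (h2341 : ¬ContainsPat N π [2, 3, 4, 1])
    (h3241 : ¬ContainsPat N π [3, 2, 4, 1]) (hπx : π x = N) {k : ℕ} (hxk : x < k)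
    (hk : k ≤ N) : x - 1 ≤ π k := by
  obtain ⟨hπk, -⟩ := h.apply_mem (i := k) ⟨by omega, hk⟩
  have hne : ∀ i, i < x → π i ≠ π k := fun i hi he => by
    have := h.eq_of_apply_eq (by omega) he
    omega
  set s := Finset.Icc 1 (x - 1)
  have hbelow : (s.filter (π · < π k)).card ≤ π k - 1 := by
    simpa using Finset.card_le_card_of_injOn (t := Finset.Ico 1 (π k)) π
      (fun i hi => by
        simp only [Finset.coe_filter, Finset.mem_Icc, mem_ofPred_eq, s] at hi
        have := (h.apply_mem (i := i) ⟨hi.1.1, by omega⟩).1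
        simp only [Finset.coe_Ico, mem_Ico]
        omega)
      (fun i hi j _ hij => by
        simp only [Finset.coe_filter, Finset.mem_Icc, mem_ofPred_eq, s] at hi
        exact h.eq_of_apply_eq (h.apply_mem (i := i) ⟨hi.1.1, by omega⟩).1 hij)
  have habove : (s.filter (¬π · < π k)).card ≤ 1 := by
    refine Finset.card_le_one.2 fun i hi j hj => ?_
    simp only [Finset.mem_filter, Finset.mem_Icc, not_lt, s] at hi hj
    have hi' := lt_of_le_of_ne hi.2 (hne i (by omega)).symm
    have hj' := lt_of_le_of_ne hj.2 (hne j (by omega)).symm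
    by_contra hij
    rcases lt_or_gt_of_ne hij with hlt | hgt
    · exact not_lt_and_lt_of_lt_max h h2341 h3241 hπx hi.1.1 hlt (by omega) hxk hk ⟨hi', hj'⟩
    · exact not_lt_and_lt_of_lt_max h h2341 h3241 hπx hj.1.1 hgt (by omega) hxk hk ⟨hj', hi'⟩
  have hs : s.card = x - 1 := by simp [s]
  have := s.card_filter_add_card_filter_not (π · < π k)
  omega

lemma apply_le_of_lt_max (h : IsPermOn N π) (h2431 : ¬ContainsPat N π [2, 4, 3, 1])
    (hπx : π x = N) {y k p : ℕ} (hy : 1 ≤ y) (hyx : y < x) (hxk : x < k) (hkp : k < p)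
    (hp : p ≤ N) (hpy : π p < π y) : π k ≤ π y := by
  by_contra hc
  have hkN := h.apply_lt_of_ne hπx (i := k) ⟨by omega, by omega⟩ (by omega)
  exact h2431 (containsPat_2431 hyx hxk hkp hy hp ⟨hpy, by omega, by omega⟩)

end Avoidance

section Shape

variable {n : ℕ} {π : ℕ → ℕ} {x y z : ℕ}

lemma IsPermOn.mem_Icc_of_apply_eq (h : IsPermOn (n + 1) π) (hπx : π x = n + 1) :
    x ∈ Icc 1 (n + 1) :=
  h.one_le_apply_iff.1 (by omega)

lemma isGreatest_image_Iio_mem_Icc (h : IsPermOn (n + 1) π) (hπx : π x = n + 1)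
    (hz : IsGreatest (π '' Iio x) z) : z ∈ Icc (x - 1) n := by
  obtain ⟨-, hxN⟩ := h.mem_Icc_of_apply_eq hπx
  constructor
  · simpa using h.card_Icc_le_of_mapsTo le_rfl (a := 1) (b := x - 1) (d := z) fun i ⟨hi1, hix⟩ =>
      ⟨(h.apply_mem ⟨hi1, by omega⟩).1, hz.2 ⟨i, by simp only [mem_Iio]; omega, rfl⟩⟩
  · obtain ⟨i, hi, rfl⟩ := hz.1
    by_cases hπi : 1 ≤ π i
    · have := h.apply_lt_of_ne hπx (h.one_le_apply_iff.1 hπi) (ne_of_lt hi)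
      omega
    · omega

lemma lt_of_apply_le_sub_two (h : IsPermOn (n + 1) π) (h2341 : ¬ContainsPat (n + 1) π [2, 3, 4, 1])
    (h3241 : ¬ContainsPat (n + 1) π [3, 2, 4, 1]) (hπx : π x = n + 1) {k : ℕ} (hk : k ≤ n + 1)
    (hπk : π k ≤ x - 2) : k < x := by
  obtain ⟨hx1, hxN⟩ := h.mem_Icc_of_apply_eq hπx
  by_contra hkx
  rcases eq_or_lt_of_le (not_lt.1 hkx) with hxk | hxk
  · rw [← hxk, hπx] at hπk
    omega
  · have := sub_one_le_apply_of_lt_max h h2341 h3241 hπx hxk hk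
    have := (h.apply_mem (i := k) ⟨by omega, hk⟩).1
    omega

lemma image_Icc_one_sub_one_eq_insert (h : IsPermOn (n + 1) π)
    (h2341 : ¬ContainsPat (n + 1) π [2, 3, 4, 1]) (h3241 : ¬ContainsPat (n + 1) π [3, 2, 4, 1])
    (hπx : π x = n + 1) (hz : IsGreatest (π '' Iio x) z) (hy : y < x ∧ π y = z) (hx : 2 ≤ x) :
    π '' Icc 1 (x - 1) = insert z (Icc 1 (x - 2)) := by
  obtain ⟨-, hxN⟩ := h.mem_Icc_of_apply_eq hπx
  obtain ⟨hzx, -⟩ := isGreatest_image_Iio_mem_Icc h hπx hz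
  have hsub : insert z (Icc 1 (x - 2)) ⊆ π '' Icc 1 (x - 1) := by
    rintro v (rfl | ⟨hv1, hv⟩)
    · obtain ⟨hy1, -⟩ := h.one_le_apply_iff.1 (by omega : 1 ≤ π y)
      exact ⟨y, ⟨hy1, by omega⟩, hy.2⟩
    · obtain ⟨k, ⟨hk1, hkN⟩, rfl⟩ := h.exists_apply_eq ⟨hv1, by omega⟩
      exact ⟨k, ⟨hk1, by have := lt_of_apply_le_sub_two h h2341 h3241 hπx hkN hv; omega⟩, rfl⟩
  refine (eq_of_subset_of_ncard_le hsub ?_ ((finite_Icc _ _).image π)).symm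
  rw [ncard_insert_of_notMem (by simp only [mem_Icc]; omega), ncard_Icc_nat]
  have := ncard_image_le (f := π) (finite_Icc 1 (x - 1))
  rw [ncard_Icc_nat] at this
  omega

lemma image_before_max_erase (h : IsPermOn (n + 1) π)
    (h2341 : ¬ContainsPat (n + 1) π [2, 3, 4, 1]) (h3241 : ¬ContainsPat (n + 1) π [3, 2, 4, 1])
    (hπx : π x = n + 1) (hz : IsGreatest (π '' Iio x) z) (hy : y < x ∧ π y = z) :
    π '' {i : ℕ | 1 ≤ i ∧ i ≤ x - 1 ∧ i ≠ y} = Icc 1 (x - 2) := by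
  rcases lt_or_ge x 2 with hx | hx
  · ext v
    simp only [mem_image, mem_ofPred_eq, mem_Icc]
    constructor
    · rintro ⟨i, hi, -⟩
      omega
    · omega
  obtain ⟨hzx, -⟩ := isGreatest_image_Iio_mem_Icc h hπx hz
  have himg := image_Icc_one_sub_one_eq_insert h h2341 h3241 hπx hz hy hx
  ext v
  constructor
  · rintro ⟨i, ⟨hi1, hix, hiy⟩, rfl⟩
    have hπi : π i ∈ insert z (Icc 1 (x - 2)) := himg ▸ mem_image_of_mem π ⟨hi1, hix⟩
    refine hπi.resolve_left fun he => hiy (h.eq_of_apply_eq ?_ (he.trans hy.2.symm))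
    omega
  · intro hv
    obtain ⟨i, ⟨hi1, hix⟩, rfl⟩ := himg.symm ▸ mem_insert_of_mem z hv
    refine ⟨i, ⟨hi1, hix, ?_⟩, rfl⟩
    rintro rfl
    have := hv.2
    omega

lemma image_after_max (h : IsPermOn (n + 1) π)
    (h2341 : ¬ContainsPat (n + 1) π [2, 3, 4, 1]) (h3241 : ¬ContainsPat (n + 1) π [3, 2, 4, 1])
    (hπx : π x = n + 1) (hz : IsGreatest (π '' Iio x) z) (hy : y < x ∧ π y = z) :
    π '' Icc (x + 1) (n + 1) = Icc (x - 1) n \ {z} := by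
  obtain ⟨hx1, hxN⟩ := h.mem_Icc_of_apply_eq hπx
  ext v
  constructor
  · rintro ⟨k, ⟨hxk, hkN⟩, rfl⟩
    have hπk := h.apply_lt_of_ne hπx (i := k) ⟨by omega, hkN⟩ (by omega)
    refine ⟨⟨sub_one_le_apply_of_lt_max h h2341 h3241 hπx hxk hkN, by omega⟩, fun he => ?_⟩
    have := h.eq_of_apply_eq (h.apply_mem (i := k) ⟨by omega, hkN⟩).1 (he.trans hy.2.symm)
    omega
  · rintro ⟨⟨hxv, hvn⟩, hvz⟩
    have hvz : v ≠ π y := hy.2 ▸ hvz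
    have hv1 : 1 ≤ v := by
      by_contra hv0
      have hy0 : y = 0 := by omega
      exact hvz (by rw [hy0, h.2 0 (by simp)]; omega)
    obtain ⟨k, ⟨hk1, hkN⟩, rfl⟩ := h.exists_apply_eq ⟨hv1, by omega⟩
    refine ⟨k, ⟨?_, hkN⟩, rfl⟩
    by_contra hkx
    rcases eq_or_lt_of_le (show k ≤ x by omega) with rfl | hkx
    · omega
    · have hL : π k ∈ Icc 1 (x - 2) := image_before_max_erase h h2341 h3241 hπx hz hy ▸
        mem_image_of_mem π ⟨hk1, by omega, fun he => hvz (he ▸ rfl)⟩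
      have := hL.2
      omega

/-- After an entry above `z` only entries above `z` follow (2431), which leaves too few positions
for the values `x - 1, …, z - 1`. -/
lemma apply_lt_of_mem_Icc_after_max (h : IsPermOn (n + 1) π)
    (h2431 : ¬ContainsPat (n + 1) π [2, 4, 3, 1]) (hπx : π x = n + 1) (hy : y < x ∧ π y = z)
    (hR : π '' Icc (x + 1) (n + 1) = Icc (x - 1) n \ {z}) (hxz : x - 1 < z) (hzn : z ≤ n)
    {k : ℕ} (hk : k ∈ Icc (x + 1) (z + 1)) : π k < z := by
  obtain ⟨hxk, hkz⟩ := hk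
  have hy1 : 1 ≤ y := (h.one_le_apply_iff.1 (by omega : 1 ≤ π y)).1
  have hπk : π k ≠ z := (hR.le (mem_image_of_mem π ⟨hxk, by omega⟩)).2
  by_contra hkz'
  have hsub : Icc (x - 1) (z - 1) ⊆ π '' Icc (x + 1) (k - 1) := by
    rintro v ⟨hv1, hv2⟩
    obtain ⟨p, ⟨hxp, hpN⟩, rfl⟩ := hR.ge ⟨⟨hv1, by omega⟩, by simp only [mem_singleton_iff]; omega⟩
    refine ⟨p, ⟨hxp, ?_⟩, rfl⟩
    by_contra hpk
    rcases eq_or_lt_of_le (show k ≤ p by omega) with rfl | hkp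
    · omega
    · have := apply_le_of_lt_max h h2431 hπx hy1 hy.1 (by omega) hkp hpN (by omega)
      omega
  have := card_Icc_le_of_subset_image hsub
  omega

lemma image_after_max_blocks (h : IsPermOn (n + 1) π)
    (h2431 : ¬ContainsPat (n + 1) π [2, 4, 3, 1]) (hπx : π x = n + 1) (hy : y < x ∧ π y = z)
    (hR : π '' Icc (x + 1) (n + 1) = Icc (x - 1) n \ {z}) (hxz : x - 1 < z) (hzn : z ≤ n) :
    π '' Icc (x + 1) (z + 1) = Icc (x - 1) (z - 1) ∧
      π '' Icc (z + 2) (n + 1) = Icc (z + 1) n := by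
  have hlow := fun k => apply_lt_of_mem_Icc_after_max h h2431 hπx hy hR hxz hzn (k := k)
  have hfirst : π '' Icc (x + 1) (z + 1) = Icc (x - 1) (z - 1) := by
    refine eq_of_subset_of_ncard_le ?_ ?_ (finite_Icc _ _)
    · rintro _ ⟨k, ⟨hk1, hk2⟩, rfl⟩
      exact ⟨(hR.le (mem_image_of_mem π ⟨hk1, by omega⟩)).1.1,
        by have := hlow k ⟨hk1, hk2⟩; omega⟩
    · rw [InjOn.ncard_image (h.1.injOn.mono (Icc_subset_Icc (by omega) (by omega))),
        ncard_Icc_nat, ncard_Icc_nat]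
      omega
  refine ⟨hfirst, ?_⟩
  ext v
  constructor
  · rintro ⟨k, ⟨hk1, hk2⟩, rfl⟩
    obtain ⟨⟨hk3, hk4⟩, hkz⟩ := hR.le (mem_image_of_mem π ⟨by omega, hk2⟩)
    simp only [mem_singleton_iff] at hkz
    refine ⟨?_, hk4⟩
    by_contra hlt
    obtain ⟨p, ⟨hp1, hp2⟩, hpk⟩ := hfirst.ge (⟨hk3, by omega⟩ : π k ∈ Icc (x - 1) (z - 1))
    have := h.eq_of_apply_eq (h.apply_mem (i := p) ⟨by omega, by omega⟩).1 hpk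
    omega
  · rintro ⟨hv1, hv2⟩
    obtain ⟨p, ⟨hp1, hp2⟩, rfl⟩ := hR.ge ⟨⟨by omega, hv2⟩, by simp only [mem_singleton_iff]; omega⟩
    refine ⟨p, ⟨?_, hp2⟩, rfl⟩
    by_contra hpz
    have := hlow p ⟨hp1, by omega⟩
    omega

end Shape

lemma isLeast_insert_Icc_diff {a n z w : ℕ} (haz : a ≤ z) (hzn : z ≤ n)
    (hw : IsLeast (insert (n + 1) (Icc a n \ {z})) w) :
    z = a ∧ w = a + 1 ∨ a < z ∧ w = a := by
  have hleast : IsLeast (insert (n + 1) (Icc a n \ {z})) (if z = a then a + 1 else a) := by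
    refine ⟨?_, ?_⟩
    · split_ifs with hza
      · rcases eq_or_lt_of_le (show a ≤ n by omega) with han | han
        · exact Or.inl (by omega)
        · exact Or.inr ⟨⟨by omega, han⟩, by simp only [mem_singleton_iff]; omega⟩
      · exact Or.inr ⟨⟨le_rfl, by omega⟩, hza ∘ Eq.symm⟩
    · rintro v (rfl | ⟨⟨hav, -⟩, hvz⟩)
      · split_ifs <;> omega
      · simp only [mem_singleton_iff] at hvz
        split_ifs <;> omega
  have := hw.unique hleast
  split_ifs at this <;> omega

/-- Lemma 3.1: the structure of `(2341,2431,3241)`-avoiding permutations. -/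
theorem avoiding_perm_shape (n : ℕ) (π : ℕ → ℕ) (hπ : π ∈ PermSet (n + 1))
    (x y z w : ℕ)
    (hx : x ∈ Set.Icc 1 (n + 1) ∧ π x = n + 1)
    (hz : IsGreatest (π '' Set.Iio x) z)
    (hy : y < x ∧ π y = z)
    (hw : IsLeast (π '' Set.Icc x (n + 1)) w) :
    (x - 1 ≤ z ∧ z ≤ n ∧ x - 1 ≤ w ∧ w ≤ x) ∧
    ((z = n ∧ z < w) →
      x = n + 1 ∧ w = n + 1 ∧
      π '' {i : ℕ | 1 ≤ i ∧ i ≤ n ∧ i ≠ y} = Set.Icc 1 (n - 1)) ∧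
    ((z < n ∧ z < w) →
      1 ≤ x ∧ x ≤ n ∧ z = x - 1 ∧ w = x ∧
      π '' {i : ℕ | 1 ≤ i ∧ i ≤ x - 1 ∧ i ≠ y} = Set.Icc 1 (x - 2) ∧
      π '' Set.Icc (x + 1) (n + 1) = Set.Icc x n) ∧
    ((z = n ∧ w < z) →
      2 ≤ x ∧ x ≤ n ∧ w = x - 1 ∧
      π '' {i : ℕ | 1 ≤ i ∧ i ≤ x - 1 ∧ i ≠ y} = Set.Icc 1 (x - 2) ∧
      π '' Set.Icc (x + 1) (n + 1) = Set.Icc (x - 1) (n - 1)) ∧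
    ((z < n ∧ w < z) →
      2 ≤ x ∧ x ≤ n - 1 ∧ x - 1 < z ∧ z < n ∧ w = x - 1 ∧
      π '' {i : ℕ | 1 ≤ i ∧ i ≤ x - 1 ∧ i ≠ y} = Set.Icc 1 (x - 2) ∧
      π '' Set.Icc (x + 1) (z + 1) = Set.Icc (x - 1) (z - 1) ∧
      π '' Set.Icc (z + 2) (n + 1) = Set.Icc (z + 1) n) := by
  obtain ⟨h, h2341, h2431, h3241⟩ := hπ
  obtain ⟨⟨hx1, hxN⟩, hπx⟩ := hx
  obtain ⟨hzx, hzn⟩ := isGreatest_image_Iio_mem_Icc h hπx hz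
  have hL := image_before_max_erase h h2341 h3241 hπx hz hy
  have hR := image_after_max h h2341 h3241 hπx hz hy
  have hw1 : 1 ≤ w := by
    obtain ⟨k, ⟨hxk, hkN⟩, rfl⟩ := hw.1
    exact (h.apply_mem ⟨by omega, hkN⟩).1
  have hIcc : Icc x (n + 1) = insert x (Icc (x + 1) (n + 1)) := by
    ext
    simp only [mem_Icc, mem_insert_iff]
    omega
  rw [hIcc, image_insert_eq, hR, hπx] at hw
  have hwz := isLeast_insert_Icc_diff hzx hzn hw
  refine ⟨by omega, fun ⟨hzn', hzw⟩ => ?_, fun ⟨hzn', hzw⟩ => ?_, fun ⟨hzn', hwz'⟩ => ?_,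
    fun ⟨hzn', hwz'⟩ => ?_⟩
  · obtain rfl : x = n + 1 := by omega
    exact ⟨rfl, by omega, by simpa using hL⟩
  · refine ⟨hx1, by omega, by omega, by omega, hL, hR.trans ?_⟩
    ext
    simp only [mem_sdiff, mem_Icc, mem_singleton_iff]
    omega
  · refine ⟨by omega, by omega, by omega, hL, hR.trans ?_⟩
    ext
    simp only [mem_sdiff, mem_Icc, mem_singleton_iff]
    omega
  · exact ⟨by omega, by omega, by omega, hzn', by omega, hL,
      image_after_max_blocks h h2431 hπx hy hR (by omega) hzn⟩
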